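/- With notation as above, the internal regret R^int = max_{i,j} Σ_{t: p_t = i/N} (ℓ(y_t, i/N) - ℓ(y_t, j/N)) satisfies R^int ≤ 2B·Σ_{i=0}^N T_i·|ρ(i) - i/N| = 2B·T·C_T, where C_T = Σ_i (T_i/T)·|ρ(i) - i/N| is the ℓ₁ calibration error. -/

import Mathlib

open Finset

/-!
Bin the rounds by forecast. On the bin of `p = i/N` with empirical frequency `ρ`, outcomes are
binary, so the total loss of any forecast `q` is `T_i` times the expected loss
`ρ ℓ(1, q) + (1 - ρ) ℓ(0, q)`. This is affine in `ρ` with slope `ℓ(1, q) - ℓ(0, q) ∈ [-B, B]`;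
moving `ρ` to `p` costs at most `B |ρ - p|` for each of the two forecasts, and at `ρ = p`
properness says that `p` beats `q`. Hence switching from `p` to `q` gains at most
`2B T_i |ρ - p|`, one term of the calibration sum.
-/

def expectedLoss (ℓ : ℝ → ℝ → ℝ) (r p : ℝ) : ℝ := r * ℓ 1 p + (1 - r) * ℓ 0 p

section ExpectedLoss

variable (ℓ : ℝ → ℝ → ℝ)

lemma loss_eq_expectedLoss {y : ℝ} (hy : y = 0 ∨ y = 1) (p : ℝ) :
    ℓ y p = expectedLoss ℓ y p := by
  rcases hy with rfl | rfl <;> simp [expectedLoss]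

lemma expectedLoss_sub_expectedLoss (r s p : ℝ) :
    expectedLoss ℓ r p - expectedLoss ℓ s p = (r - s) * (ℓ 1 p - ℓ 0 p) := by
  unfold expectedLoss; ring

lemma sum_expectedLoss {ι : Type*} (s : Finset ι) (y : ι → ℝ) {r : ℝ}
    (hr : #s * r = ∑ t ∈ s, y t) (p : ℝ) :
    ∑ t ∈ s, expectedLoss ℓ (y t) p = #s * expectedLoss ℓ r p := by
  simp only [expectedLoss, sum_add_distrib, ← sum_mul, sum_sub_distrib, sum_const,
    nsmul_eq_mul, mul_one, ← hr]
  ring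

lemma expectedLoss_sub_le {B p q : ℝ} (hproper : expectedLoss ℓ p p ≤ expectedLoss ℓ p q)
    (hp : |ℓ 1 p - ℓ 0 p| ≤ B) (hq : |ℓ 1 q - ℓ 0 q| ≤ B) (r : ℝ) :
    expectedLoss ℓ r p - expectedLoss ℓ r q ≤ 2 * B * |r - p| := by
  have slope_le {d : ℝ} (hd : |d| ≤ B) : |(r - p) * d| ≤ |r - p| * B := by
    rw [abs_mul]; exact mul_le_mul_of_nonneg_left hd (abs_nonneg _)
  have hp' := (le_abs_self _).trans (slope_le hp)
  have hq' := (neg_le_abs _).trans (slope_le hq)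
  have split : expectedLoss ℓ r p - expectedLoss ℓ r q =
      (expectedLoss ℓ r p - expectedLoss ℓ p p) - (expectedLoss ℓ r q - expectedLoss ℓ p q) +
        (expectedLoss ℓ p p - expectedLoss ℓ p q) := by ring
  rw [split, expectedLoss_sub_expectedLoss, expectedLoss_sub_expectedLoss]
  linarith

lemma sum_loss_sub_le {ι : Type*} (s : Finset ι) {y : ι → ℝ}
    (hy : ∀ t ∈ s, y t = 0 ∨ y t = 1) {r : ℝ} (hr : #s * r = ∑ t ∈ s, y t)
    {B p q : ℝ} (hproper : expectedLoss ℓ p p ≤ expectedLoss ℓ p q)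
    (hp : |ℓ 1 p - ℓ 0 p| ≤ B) (hq : |ℓ 1 q - ℓ 0 q| ≤ B) :
    ∑ t ∈ s, (ℓ (y t) p - ℓ (y t) q) ≤ 2 * B * (#s * |r - p|) :=
  calc ∑ t ∈ s, (ℓ (y t) p - ℓ (y t) q)
      = ∑ t ∈ s, (expectedLoss ℓ (y t) p - expectedLoss ℓ (y t) q) :=
        sum_congr rfl fun t ht => by
          rw [loss_eq_expectedLoss ℓ (hy t ht), loss_eq_expectedLoss ℓ (hy t ht)]
    _ = #s * (expectedLoss ℓ r p - expectedLoss ℓ r q) := by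
        rw [sum_sub_distrib, sum_expectedLoss ℓ s y hr, sum_expectedLoss ℓ s y hr, mul_sub]
    _ ≤ #s * (2 * B * |r - p|) :=
        mul_le_mul_of_nonneg_left (expectedLoss_sub_le ℓ hproper hp hq r) (Nat.cast_nonneg _)
    _ = 2 * B * (#s * |r - p|) := by ring

end ExpectedLoss

lemma card_mul_eq_sum_of_eq_div {ι : Type*} {s : Finset ι} {y : ι → ℝ} {r : ℝ}
    (hr : 0 < #s → r = (∑ t ∈ s, y t) / #s) : #s * r = ∑ t ∈ s, y t := by
  rcases (#s).eq_zero_or_pos with hs | hs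
  · simp [card_eq_zero.mp hs]
  · rw [hr hs, mul_div_cancel₀ _ (Nat.cast_ne_zero.mpr hs.ne')]

lemma natCast_div_mem_Icc {N : ℕ} (i : Fin (N + 1)) : (i : ℝ) / N ∈ Set.Icc (0 : ℝ) 1 :=
  ⟨by positivity,
    div_le_one_of_le₀ (by exact_mod_cast Nat.lt_succ_iff.mp i.isLt) (Nat.cast_nonneg N)⟩

lemma natCast_mul_card_div {T : ℕ} (s : Finset (Fin T)) : (T : ℝ) * (#s / T) = #s :=
  mul_div_cancel_of_imp' fun hT => by
    have := card_le_univ s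
    simp_all

theorem internal_regret_le_calibration_general (N T : ℕ) (ℓ : ℝ → ℝ → ℝ) (B : ℝ)
    (y : Fin T → ℝ) (hy : ∀ t, y t = 0 ∨ y t = 1)
    (pred : Fin T → Fin (N + 1))
    (hproper : ∀ p ∈ Set.Icc (0:ℝ) 1, ∀ q ∈ Set.Icc (0:ℝ) 1,
      p * ℓ 1 p + (1 - p) * ℓ 0 p ≤ p * ℓ 1 q + (1 - p) * ℓ 0 q)
    (hbound : ∀ y' ∈ ({0, 1} : Set ℝ), ∀ p ∈ Set.Icc (0:ℝ) 1, 0 ≤ ℓ y' p ∧ ℓ y' p ≤ B)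
    -- `ρ i` is the empirical frequency on rounds where `i/N` was predicted
    (ρ : Fin (N + 1) → ℝ)
    (hρ : ∀ i, 0 < ({t | pred t = i} : Finset (Fin T)).card →
      ρ i = (∑ t ∈ ({t | pred t = i} : Finset (Fin T)), y t) /
        ({t | pred t = i} : Finset (Fin T)).card) :
    (∀ i j : Fin (N + 1),
      ∑ t ∈ ({t | pred t = i} : Finset (Fin T)),
          (ℓ (y t) ((i : ℝ) / N) - ℓ (y t) ((j : ℝ) / N)) ≤
        2 * B * ∑ i' : Fin (N + 1),
          (({t | pred t = i'} : Finset (Fin T)).card : ℝ) * |ρ i' - (i' : ℝ) / N|) ∧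
    2 * B * (∑ i' : Fin (N + 1),
        (({t | pred t = i'} : Finset (Fin T)).card : ℝ) * |ρ i' - (i' : ℝ) / N|) =
      2 * B * T * ∑ i' : Fin (N + 1),
        ((({t | pred t = i'} : Finset (Fin T)).card : ℝ) / T) * |ρ i' - (i' : ℝ) / N| := by
  have hslope : ∀ p ∈ Set.Icc (0:ℝ) 1, |ℓ 1 p - ℓ 0 p| ≤ B := fun p hp =>
    abs_sub_le_of_nonneg_of_le (hbound 1 (by simp) p hp).1 (hbound 1 (by simp) p hp).2
      (hbound 0 (by simp) p hp).1 (hbound 0 (by simp) p hp).2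
  have hB : 0 ≤ B := (abs_nonneg _).trans (hslope 0 (by simp))
  refine ⟨fun i j => ?_, ?_⟩
  · calc _ ≤ 2 * B * (({t | pred t = i} : Finset (Fin T)).card * |ρ i - (i : ℝ) / N|) :=
          sum_loss_sub_le ℓ _ (fun t _ => hy t) (card_mul_eq_sum_of_eq_div (hρ i))
            (hproper _ (natCast_div_mem_Icc i) _ (natCast_div_mem_Icc j))
            (hslope _ (natCast_div_mem_Icc i)) (hslope _ (natCast_div_mem_Icc j))
      _ ≤ _ := by
          gcongr
          exact single_le_sum (f := fun i' => (#{t | pred t = i'} : ℝ) * |ρ i' - (i' : ℝ) / N|)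
            (fun _ _ => by positivity) (mem_univ i)
  · simp only [mul_sum, mul_assoc, ← mul_assoc (T : ℝ), natCast_mul_card_div]

/-- Internal regret of a calibrated proper-loss forecaster:
every switching gain is bounded by `2B ∑_i T_i |ρ(i) - i/N|`, which equals
`2B T C_T` where `C_T` is the ℓ₁ calibration error. -/
theorem internal_regret_le_calibration (N T : ℕ) (ℓ : ℝ → ℝ → ℝ) (B : ℝ)
    (y : Fin T → ℝ) (hy : ∀ t, y t = 0 ∨ y t = 1)
    (pred : Fin T → Fin (N + 1))
    (hproper : ∀ p ∈ Set.Icc (0:ℝ) 1, ∀ q ∈ Set.Icc (0:ℝ) 1,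
      p * ℓ 1 p + (1 - p) * ℓ 0 p ≤ p * ℓ 1 q + (1 - p) * ℓ 0 q)
    (hbound : ∀ y' ∈ ({0, 1} : Set ℝ), ∀ p ∈ Set.Icc (0:ℝ) 1, 0 ≤ ℓ y' p ∧ ℓ y' p ≤ B)
    (hB : 0 < B) (hT : 0 < T)
    -- `ρ i` is the empirical frequency on rounds where `i/N` was predicted
    (ρ : Fin (N + 1) → ℝ)
    (hρ : ∀ i, 0 < ({t | pred t = i} : Finset (Fin T)).card →
      ρ i = (∑ t ∈ ({t | pred t = i} : Finset (Fin T)), y t) /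
        ({t | pred t = i} : Finset (Fin T)).card)
    -- the summand is taken to be `0` when `T_i = 0`
    (hρ0 : ∀ i, ({t | pred t = i} : Finset (Fin T)).card = 0 → ρ i = (i : ℝ) / N) :
    (∀ i j : Fin (N + 1),
      ∑ t ∈ ({t | pred t = i} : Finset (Fin T)),
          (ℓ (y t) ((i : ℝ) / N) - ℓ (y t) ((j : ℝ) / N)) ≤
        2 * B * ∑ i' : Fin (N + 1),
          (({t | pred t = i'} : Finset (Fin T)).card : ℝ) * |ρ i' - (i' : ℝ) / N|) ∧
    2 * B * (∑ i' : Fin (N + 1),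
        (({t | pred t = i'} : Finset (Fin T)).card : ℝ) * |ρ i' - (i' : ℝ) / N|) =
      2 * B * T * ∑ i' : Fin (N + 1),
        ((({t | pred t = i'} : Finset (Fin T)).card : ℝ) / T) * |ρ i' - (i' : ℝ) / N| :=
  internal_regret_le_calibration_general N T ℓ B y hy pred hproper hbound ρ hρ
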